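/- arXiv:1009.4827 — 7 statements merged into one kernel-verified Lean document; each statement's English description precedes it below -/
import Mathlib

section
/- Let z₁, z₂, z₃ ∈ ℂ be three distinct points. For i ≠ j set u_{ij} := (z_j − z_i)/|z_j − z_i| (a complex number of modulus 1, with u_{ji} = −u_{ij}), and define the quadratic polynomials β_i(X) := ∏_{j ≠ i} (X − u_{ij}) ∈ ℂ[X], i.e. β₁ = (X − u₁₂)(X − u₁₃), β₂ = (X − u₂₁)(X − u₂₃), β₃ = (X − u₃₁)(X − u₃₂). Then β₁, β₂, β₃ are linearly independent over ℂ. (This is the Euclidean conjecture for n = 3.) -/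
/-!
Write `w₁, w₂, w₃` for the unit directions of the sides `z₁ → z₂ → z₃ → z₁` of the triangle.
The three quadratics are `(X - w₁)(X + w₃)`, `(X + w₁)(X - w₂)`, `(X - w₃)(X + w₂)`, and since
`conj wᵢ = wᵢ⁻¹` the determinant of their coefficients is
`w₁ w₂ w₃ (|w₁ - w₂|² + |w₂ - w₃|² + |w₃ - w₁|²)`.
It vanishes only if `w₁ = w₂ = w₃`, which is impossible because the sides add up to zero.
-/

open Polynomial

namespace Polynomial

variable {R : Type*} [CommRing R]

def coeffMatrix {n : ℕ} (f : Fin n → R[X]) : Matrix (Fin n) (Fin n) R :=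
  Matrix.of fun i j => (f i).coeff j

theorem linearIndependent_of_det_coeffMatrix_ne_zero [IsDomain R] {n : ℕ} {f : Fin n → R[X]}
    (h : (coeffMatrix f).det ≠ 0) : LinearIndependent R f :=
  LinearIndependent.of_comp (LinearMap.pi fun j : Fin n => lcoeff R j)
    (Matrix.linearIndependent_rows_of_det_ne_zero h)

theorem X_sub_C_mul_X_sub_C (p q : R) :
    (X - C p) * (X - C q) = X ^ 2 - C (p + q) * X + C (p * q) := by
  rw [C_add, C_mul]; ring

theorem coeff_zero_X_sub_C_mul_X_sub_C (p q : R) :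
    ((X - C p) * (X - C q)).coeff 0 = p * q := by
  simp [X_sub_C_mul_X_sub_C]

theorem coeff_one_X_sub_C_mul_X_sub_C (p q : R) :
    ((X - C p) * (X - C q)).coeff 1 = -(p + q) := by
  simp [X_sub_C_mul_X_sub_C, coeff_C]

theorem coeff_two_X_sub_C_mul_X_sub_C [Nontrivial R] (p q : R) :
    ((X - C p) * (X - C q)).coeff 2 = 1 := by
  simp [X_sub_C_mul_X_sub_C]

end Polynomial

namespace Complex

theorem norm_div_norm {v : ℂ} (hv : v ≠ 0) : ‖v / (‖v‖ : ℂ)‖ = 1 := by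
  rw [norm_div, norm_real, norm_norm, div_self (norm_ne_zero_iff.mpr hv)]

theorem sub_div_norm_sub_rev (z₁ z₂ : ℂ) :
    (z₁ - z₂) / (‖z₁ - z₂‖ : ℂ) = -((z₂ - z₁) / (‖z₂ - z₁‖ : ℂ)) := by
  rw [norm_sub_rev, ← neg_sub, neg_div]

theorem ofReal_norm_sub_sq {a b : ℂ} (ha : ‖a‖ = 1) (hb : ‖b‖ = 1) :
    ((‖a - b‖ ^ 2 : ℝ) : ℂ) = (a - b) * (a⁻¹ - b⁻¹) := by
  rw [ofReal_pow, ← mul_conj', map_sub, inv_eq_conj ha, inv_eq_conj hb]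

theorem not_div_norm_eq_and_eq_of_add_add_eq_zero {v₁ v₂ v₃ : ℂ} (h₁ : v₁ ≠ 0) (h₂ : v₂ ≠ 0)
    (h₃ : v₃ ≠ 0) (hsum : v₁ + v₂ + v₃ = 0) :
    ¬(v₁ / (‖v₁‖ : ℂ) = v₂ / (‖v₂‖ : ℂ) ∧ v₂ / (‖v₂‖ : ℂ) = v₃ / (‖v₃‖ : ℂ)) := by
  rintro ⟨h₁₂, h₂₃⟩
  have polar : ∀ v : ℂ, v ≠ 0 → v = ‖v‖ * (v / (‖v‖ : ℂ)) := fun v hv =>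
    (mul_div_cancel₀ v (ofReal_ne_zero.mpr (norm_ne_zero_iff.mpr hv))).symm
  set w := v₁ / (‖v₁‖ : ℂ)
  have e₁ : v₁ = ‖v₁‖ * w := polar v₁ h₁
  have e₂ : v₂ = ‖v₂‖ * w := by rw [h₁₂]; exact polar v₂ h₂
  have e₃ : v₃ = ‖v₃‖ * w := by rw [h₁₂, h₂₃]; exact polar v₃ h₃
  have hzero : ((‖v₁‖ + ‖v₂‖ + ‖v₃‖ : ℝ) : ℂ) * w = 0 := by
    push_cast; linear_combination hsum - e₁ - e₂ - e₃
  have hpos : 0 < ‖v₁‖ + ‖v₂‖ + ‖v₃‖ := by positivity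
  exact mul_ne_zero (ofReal_ne_zero.mpr hpos.ne') (div_ne_zero h₁ (by simpa using h₁)) hzero

theorem norm_sub_sq_add_pos {w₁ w₂ w₃ : ℂ} (h : ¬(w₁ = w₂ ∧ w₂ = w₃)) :
    0 < ‖w₁ - w₂‖ ^ 2 + ‖w₂ - w₃‖ ^ 2 + ‖w₃ - w₁‖ ^ 2 := by
  by_contra! hle
  have h₁₂ : ‖w₁ - w₂‖ = 0 := by
    nlinarith [norm_nonneg (w₁ - w₂), sq_nonneg ‖w₂ - w₃‖, sq_nonneg ‖w₃ - w₁‖]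
  have h₂₃ : ‖w₂ - w₃‖ = 0 := by
    nlinarith [norm_nonneg (w₂ - w₃), sq_nonneg ‖w₁ - w₂‖, sq_nonneg ‖w₃ - w₁‖]
  exact h ⟨sub_eq_zero.mp (norm_eq_zero.mp h₁₂), sub_eq_zero.mp (norm_eq_zero.mp h₂₃)⟩

theorem det_coeffMatrix_eq {w₁ w₂ w₃ : ℂ} (h₁ : ‖w₁‖ = 1) (h₂ : ‖w₂‖ = 1) (h₃ : ‖w₃‖ = 1) :
    (coeffMatrix ![(X - C w₁) * (X - C (-w₃)), (X - C (-w₁)) * (X - C w₂),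
      (X - C w₃) * (X - C (-w₂))]).det =
      w₁ * w₂ * w₃ * ((‖w₁ - w₂‖ ^ 2 + ‖w₂ - w₃‖ ^ 2 + ‖w₃ - w₁‖ ^ 2 : ℝ) : ℂ) := by
  have hw₁ : w₁ ≠ 0 := ne_zero_of_norm_ne_zero (by simp [h₁])
  have hw₂ : w₂ ≠ 0 := ne_zero_of_norm_ne_zero (by simp [h₂])
  have hw₃ : w₃ ≠ 0 := ne_zero_of_norm_ne_zero (by simp [h₃])
  simp only [coeffMatrix, Matrix.det_fin_three, Matrix.of_apply, Matrix.cons_val_zero,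
    Matrix.cons_val_one, Matrix.cons_val_two, Matrix.head_cons, Matrix.tail_cons, Fin.val_zero,
    Fin.val_one, Fin.val_two, coeff_zero_X_sub_C_mul_X_sub_C, coeff_one_X_sub_C_mul_X_sub_C,
    coeff_two_X_sub_C_mul_X_sub_C, ofReal_add, ofReal_norm_sub_sq h₁ h₂, ofReal_norm_sub_sq h₂ h₃,
    ofReal_norm_sub_sq h₃ h₁]
  field_simp
  ring

theorem det_coeffMatrix_ne_zero {w₁ w₂ w₃ : ℂ} (h₁ : ‖w₁‖ = 1) (h₂ : ‖w₂‖ = 1) (h₃ : ‖w₃‖ = 1)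
    (hne : ¬(w₁ = w₂ ∧ w₂ = w₃)) :
    (coeffMatrix ![(X - C w₁) * (X - C (-w₃)), (X - C (-w₁)) * (X - C w₂),
      (X - C w₃) * (X - C (-w₂))]).det ≠ 0 := by
  have hw : ∀ {w : ℂ}, ‖w‖ = 1 → w ≠ 0 := fun h => ne_zero_of_norm_ne_zero (by simp [h])
  rw [det_coeffMatrix_eq h₁ h₂ h₃]
  exact mul_ne_zero (mul_ne_zero (mul_ne_zero (hw h₁) (hw h₂)) (hw h₃))
    (ofReal_ne_zero.mpr (norm_sub_sq_add_pos hne).ne')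

end Complex

open Complex in
/-- The Euclidean conjecture for `n = 3`: for three distinct points
`z₁, z₂, z₃` in the plane `ℂ`, with unit directions
`u_{ij} = (z_j - z_i)/|z_j - z_i|` (so `u_{ji} = -u_{ij}`), the quadratics
`β_i = ∏_{j ≠ i} (X - u_{ij})` are linearly independent over `ℂ`. -/
theorem euclidean_conjecture_three_points (z₁ z₂ z₃ : ℂ)
    (h12 : z₁ ≠ z₂) (h13 : z₁ ≠ z₃) (h23 : z₂ ≠ z₃) :
    LinearIndependent ℂ
      ![(X - C ((z₂ - z₁) / (‖z₂ - z₁‖ : ℂ))) *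
          (X - C ((z₃ - z₁) / (‖z₃ - z₁‖ : ℂ))),
        (X - C ((z₁ - z₂) / (‖z₁ - z₂‖ : ℂ))) *
          (X - C ((z₃ - z₂) / (‖z₃ - z₂‖ : ℂ))),
        (X - C ((z₁ - z₃) / (‖z₁ - z₃‖ : ℂ))) *
          (X - C ((z₂ - z₃) / (‖z₂ - z₃‖ : ℂ)))] := by
  have hv₁ : z₂ - z₁ ≠ 0 := sub_ne_zero.mpr h12.symm
  have hv₂ : z₃ - z₂ ≠ 0 := sub_ne_zero.mpr h23.symm
  have hv₃ : z₁ - z₃ ≠ 0 := sub_ne_zero.mpr h13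
  rw [sub_div_norm_sub_rev z₃ z₁, sub_div_norm_sub_rev z₁ z₂, sub_div_norm_sub_rev z₂ z₃]
  refine linearIndependent_of_det_coeffMatrix_ne_zero ?_
  refine det_coeffMatrix_ne_zero (norm_div_norm hv₁) (norm_div_norm hv₂) (norm_div_norm hv₃) ?_
  exact not_div_norm_eq_and_eq_of_add_add_eq_zero hv₁ hv₂ hv₃ (by ring)
end

section
/- Let n ≥ 2. For each ordered pair (i, j) with i ≠ j in {1, …, n}, let v_{ij} ∈ ℂ² satisfy v_{ij} ∧ v_{ji} ≠ 0, where v ∧ w := v₁w₂ − v₂w₁. Let ℓ_v(Z₀, Z₁) := v₁·Z₁ − v₂·Z₀, let p_i := ∏_{j ≠ i} ℓ_{v_{ij}}, and let M(v) be the n×n matrix of coefficients of p₁, …, p_n in the monomial basis. Define D(v) := det M(v) / ∏_{i<j} ( v_{ij} ∧ v_{ji} ). Then for every permutation σ of {1, …, n}, setting v′_{ij} := v_{σ(i)σ(j)}, one has D(v′) = D(v). (The normalised determinant is invariant under permutations of the points.) -/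
/-- The symplectic form `v ∧ w = v₁w₂ - v₂w₁` on `ℂ²`. -/
def wedge (v w : ℂ × ℂ) : ℂ := v.1 * w.2 - v.2 * w.1

/-- The linear form `ℓ_v(Z₀, Z₁) = v₁ Z₁ - v₂ Z₀` associated to `v ∈ ℂ²`. -/
noncomputable def lform (v : ℂ × ℂ) : MvPolynomial (Fin 2) ℂ :=
  MvPolynomial.C v.1 * MvPolynomial.X 1 - MvPolynomial.C v.2 * MvPolynomial.X 0

/-- The `n × n` matrix whose `i`-th row consists of the coefficients of
`p_i = ∏_{j ≠ i} ℓ_{v_{ij}}` in the monomial basis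
`Z₀^{n-1}, Z₀^{n-2}Z₁, …, Z₁^{n-1}`. -/
noncomputable def coeffMat (n : ℕ) (v : Fin n → Fin n → ℂ × ℂ) :
    Matrix (Fin n) (Fin n) ℂ :=
  Matrix.of fun i k =>
    MvPolynomial.coeff
      (Finsupp.single (0 : Fin 2) (n - 1 - (k : ℕ)) + Finsupp.single (1 : Fin 2) (k : ℕ))
      (∏ j ∈ Finset.univ.filter (· ≠ i), lform (v i j))

/-- The normalised determinant `D(v) = det M(v) / ∏_{i<j} (v_{ij} ∧ v_{ji})`. -/
noncomputable def normDet (n : ℕ) (v : Fin n → Fin n → ℂ × ℂ) : ℂ :=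
  (coeffMat n v).det /
    ∏ p ∈ Finset.univ.filter (fun p : Fin n × Fin n => p.1 < p.2),
      wedge (v p.1 p.2) (v p.2 p.1)

open Finset Equiv

private lemma prod_pairsLT_eq {n : ℕ} (h : Fin n → Fin n → ℂ) :
    ∏ p ∈ Finset.univ.filter (fun p : Fin n × Fin n => p.1 < p.2), h p.1 p.2
      = ∏ i : Fin n, ∏ j ∈ Finset.Ioi i, h i j := by
  rw [Finset.prod_filter, Fintype.prod_prod_type]
  refine Finset.prod_congr rfl fun i _ => ?_
  rw [← Finset.prod_filter]
  refine Finset.prod_congr ?_ fun _ _ => rfl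
  ext j; simp

/-- Reindexing a product over pairs `i < j` by a permutation, for an antisymmetric
function: the orientation-correction signs are collected in a separate product. -/
private lemma prod_pairsLT_perm {n : ℕ} (f : Fin n → Fin n → ℂ)
    (hf : ∀ i j, f j i = - f i j) (σ : Equiv.Perm (Fin n)) :
    ∏ p ∈ Finset.univ.filter (fun p : Fin n × Fin n => p.1 < p.2), f (σ p.1) (σ p.2)
      = (∏ p ∈ Finset.univ.filter (fun p : Fin n × Fin n => p.1 < p.2),
            if σ p.1 < σ p.2 then (1 : ℂ) else -1)
        * ∏ p ∈ Finset.univ.filter (fun p : Fin n × Fin n => p.1 < p.2), f p.1 p.2 := by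
  set S := Finset.univ.filter (fun p : Fin n × Fin n => p.1 < p.2) with hS
  have memS : ∀ p : Fin n × Fin n, p ∈ S ↔ p.1 < p.2 := by
    intro p; simp [hS]
  set ψ : Fin n × Fin n → Fin n × Fin n :=
    fun p => if σ p.1 < σ p.2 then (σ p.1, σ p.2) else (σ p.2, σ p.1) with hψ
  set φ : Fin n × Fin n → Fin n × Fin n :=
    fun q => if σ.symm q.1 < σ.symm q.2 then (σ.symm q.1, σ.symm q.2)
             else (σ.symm q.2, σ.symm q.1) with hφ
  have step1 : ∀ p ∈ S, f (σ p.1) (σ p.2)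
      = (if σ p.1 < σ p.2 then (1 : ℂ) else -1) * f (ψ p).1 (ψ p).2 := by
    intro p _
    by_cases h : σ p.1 < σ p.2
    · simp [hψ, h]
    · simp [hψ, h, hf (σ p.2) (σ p.1)]
  rw [Finset.prod_congr rfl step1, Finset.prod_mul_distrib]
  congr 1
  refine Finset.prod_nbij' ψ φ ?_ ?_ ?_ ?_ ?_
  · intro p hp
    rw [memS] at hp ⊢
    by_cases h : σ p.1 < σ p.2
    · simpa [hψ, h] using h
    · have hne : σ p.1 ≠ σ p.2 := fun hc => absurd (σ.injective hc) hp.ne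
      have : σ p.2 < σ p.1 := (not_lt.mp h).lt_of_ne hne.symm
      simpa [hψ, h] using this
  · intro q hq
    rw [memS] at hq ⊢
    by_cases h : σ.symm q.1 < σ.symm q.2
    · simpa [hφ, h] using h
    · have hne : σ.symm q.1 ≠ σ.symm q.2 := fun hc => absurd (σ.symm.injective hc) hq.ne
      have : σ.symm q.2 < σ.symm q.1 := (not_lt.mp h).lt_of_ne hne.symm
      simpa [hφ, h] using this
  · intro p hp
    rw [memS] at hp
    by_cases h : σ p.1 < σ p.2
    · simp [hψ, hφ, h, hp, hp.not_gt]
    · have hne : σ p.1 ≠ σ p.2 := fun hc => absurd (σ.injective hc) hp.ne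
      have h' : σ p.2 < σ p.1 := (not_lt.mp h).lt_of_ne hne.symm
      simp [hψ, hφ, h, hp, h'.not_gt, hp.not_gt]
  · intro q hq
    rw [memS] at hq
    by_cases h : σ.symm q.1 < σ.symm q.2
    · simp [hψ, hφ, h, hq, hq.not_gt]
    · have hne : σ.symm q.1 ≠ σ.symm q.2 := fun hc => absurd (σ.symm.injective hc) hq.ne
      have h' : σ.symm q.2 < σ.symm q.1 := (not_lt.mp h).lt_of_ne hne.symm
      simp [hψ, hφ, h, hq, h'.not_gt, hq.not_gt]
  · intro p _; rfl

/-- The product of the orientation-correction signs equals the sign of the permutation.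
Proved by comparing with a Vandermonde determinant. -/
private lemma prod_signs_eq_sign {n : ℕ} (σ : Equiv.Perm (Fin n)) :
    (∏ p ∈ Finset.univ.filter (fun p : Fin n × Fin n => p.1 < p.2),
        if σ p.1 < σ p.2 then (1 : ℂ) else -1)
      = ((Equiv.Perm.sign σ : ℤ) : ℂ) := by
  set x : Fin n → ℂ := fun i => ((i : ℕ) : ℂ) with hx
  set g : Fin n → Fin n → ℂ := fun i j => x j - x i with hg
  have hganti : ∀ i j, g j i = - g i j := by intro i j; simp only [hg]; ring
  have hvand : Matrix.vandermonde (fun i => x (σ i))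
      = (Matrix.vandermonde x).submatrix σ id := by
    ext i j; simp [Matrix.vandermonde, Matrix.submatrix]
  have hdet : ∏ p ∈ Finset.univ.filter (fun p : Fin n × Fin n => p.1 < p.2), g (σ p.1) (σ p.2)
      = ((Equiv.Perm.sign σ : ℤ) : ℂ)
        * ∏ p ∈ Finset.univ.filter (fun p : Fin n × Fin n => p.1 < p.2), g p.1 p.2 := by
    have h1 := Matrix.det_vandermonde (fun i => x (σ i))
    rw [hvand, Matrix.det_permute, Matrix.det_vandermonde] at h1
    rw [prod_pairsLT_eq (fun a b => g (σ a) (σ b)), prod_pairsLT_eq g]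
    simpa [hg] using h1.symm
  have hA := prod_pairsLT_perm g hganti σ
  have hP : (∏ p ∈ Finset.univ.filter (fun p : Fin n × Fin n => p.1 < p.2), g p.1 p.2) ≠ 0 := by
    rw [Finset.prod_ne_zero_iff]
    intro p hp
    rw [Finset.mem_filter] at hp
    have hlt : (p.1 : ℕ) < (p.2 : ℕ) := hp.2
    simp only [hg, hx, sub_ne_zero]
    exact fun hc => absurd (Nat.cast_injective hc) hlt.ne'
  rw [hA] at hdet
  exact mul_right_cancel₀ hP hdet

private lemma coeffMat_perm {n : ℕ} (v : Fin n → Fin n → ℂ × ℂ) (σ : Equiv.Perm (Fin n)) :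
    coeffMat n (fun i j => v (σ i) (σ j)) = (coeffMat n v).submatrix σ id := by
  ext i k
  simp only [coeffMat, Matrix.submatrix_apply, Matrix.of_apply, id]
  congr 1
  refine Finset.prod_nbij' σ σ.symm ?_ ?_ ?_ ?_ ?_
  · intro j hj
    simp only [Finset.mem_filter, Finset.mem_univ, true_and] at hj ⊢
    exact fun hc => hj (σ.injective hc)
  · intro j hj
    simp only [Finset.mem_filter, Finset.mem_univ, true_and] at hj ⊢
    intro hc; exact hj (by rw [← hc, Equiv.apply_symm_apply])
  · intro j _; simp
  · intro j _; simp
  · intro j _; rfl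

/-- The normalised determinant is invariant under permutations of the points. -/
theorem normalisedDet_perm_invariant (n : ℕ) (hn : 2 ≤ n)
    (v : Fin n → Fin n → ℂ × ℂ)
    (hv : ∀ i j, i ≠ j → wedge (v i j) (v j i) ≠ 0)
    (σ : Equiv.Perm (Fin n)) :
    normDet n (fun i j => v (σ i) (σ j)) = normDet n v := by
  set f : Fin n → Fin n → ℂ := fun i j => wedge (v i j) (v j i) with hfdef
  have hfanti : ∀ i j, f j i = - f i j := by
    intro i j; simp only [hfdef, wedge]; ring
  have hnum : (coeffMat n (fun i j => v (σ i) (σ j))).det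
      = ((Equiv.Perm.sign σ : ℤ) : ℂ) * (coeffMat n v).det := by
    rw [coeffMat_perm, Matrix.det_permute]
  have hden : (∏ p ∈ Finset.univ.filter (fun p : Fin n × Fin n => p.1 < p.2),
        wedge (v (σ p.1) (σ p.2)) (v (σ p.2) (σ p.1)))
      = ((Equiv.Perm.sign σ : ℤ) : ℂ)
        * ∏ p ∈ Finset.univ.filter (fun p : Fin n × Fin n => p.1 < p.2),
            wedge (v p.1 p.2) (v p.2 p.1) := by
    have := prod_pairsLT_perm f hfanti σ
    rw [prod_signs_eq_sign] at this
    exact this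
  have hs : ((Equiv.Perm.sign σ : ℤ) : ℂ) ≠ 0 := by
    exact Int.cast_ne_zero.mpr (Units.ne_zero _)
  rw [normDet, normDet, hnum, hden, mul_div_mul_left _ _ hs]
end

section
/- Let z₁, z₂, z₃ ∈ ℂ be three non-collinear points, let A₁, A₂, A₃ be the interior angles of the triangle z₁z₂z₃ at the vertices z₁, z₂, z₃ respectively, and for i ≠ j set u_{ij} := (z_j − z_i)/|z_j − z_i| (so u_{ji} = −u_{ij}). Write a := u₁₂, b := u₁₃, c := u₂₃. Then det [ [1, −(a+b), ab], [1, a−c, −ac], [1, b+c, bc] ] / (8·a·b·c) = (1/2) · ( cos²(A₁/2) + cos²(A₂/2) + cos²(A₃/2) ). (This is the formula D_∞ = ½ Σᵢ cos²(Aᵢ/2) for the normalised determinant of three points in the Euclidean plane.) -/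
/-!
Dividing the determinant by `8abc` leaves `3/4 + ((a/b + b/a) + (b/c + c/b) - (a/c + c/a)) / 8`.
For unit complex numbers `u/v + v/u = 2 Re (u/v) = 2 cos ∠(u, v)`, so the three pairs are twice the
cosines of the angles at `z₁` and `z₃`, and minus twice the cosine of the angle at `z₂` (there the
rays are `-a` and `c`). The half-angle formula `cos² (A/2) = (1 + cos A) / 2` finishes.
-/

open InnerProductGeometry Complex

lemma det_div_eight_mul_mul_mul_eq {K : Type*} [Field K] [CharZero K] {a b c : K}
    (ha : a ≠ 0) (hb : b ≠ 0) (hc : c ≠ 0) :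
    Matrix.det !![1, -(a + b), a * b; 1, a - c, -(a * c); 1, b + c, b * c] / (8 * a * b * c)
      = 3 / 4 + ((a / b + b / a) + (b / c + c / b) - (a / c + c / a)) / 8 := by
  rw [Matrix.det_fin_three]
  field_simp
  simp only [Matrix.of_apply, Matrix.cons_val, Matrix.cons_val_zero, Matrix.cons_val_one]
  ring

lemma Complex.div_add_div_eq_two_cos_angle {u v : ℂ} (hu : ‖u‖ = 1) (hv : ‖v‖ = 1) :
    u / v + v / u = 2 * Real.cos (angle u v) := by
  have hu0 : u ≠ 0 := norm_ne_zero_iff.mp (by simp [hu])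
  have hv0 : v ≠ 0 := norm_ne_zero_iff.mp (by simp [hv])
  have hw : ‖u / v‖ = 1 := by simp [hu, hv]
  rw [← inv_div u v, inv_eq_conj hw, add_conj, angle_eq_abs_arg hu0 hv0, Real.cos_abs,
    cos_arg (div_ne_zero hu0 hv0), hw, div_one]
  push_cast
  ring

lemma Complex.angle_div_norm_div_norm (x y : ℂ) : angle (x / ‖x‖) (y / ‖y‖) = angle x y := by
  rcases eq_or_ne x 0 with rfl | hx
  · simp
  rcases eq_or_ne y 0 with rfl | hy
  · simp
  rw [div_eq_inv_mul, div_eq_inv_mul, ← ofReal_inv, ← ofReal_inv, ← real_smul, ← real_smul,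
    angle_smul_left_of_pos _ _ (by positivity), angle_smul_right_of_pos _ _ (by positivity)]

lemma Complex.div_norm_div_add_div_norm_div {x y : ℂ} (hx : x ≠ 0) (hy : y ≠ 0) :
    x / ‖x‖ / (y / ‖y‖) + y / ‖y‖ / (x / ‖x‖) = 2 * Real.cos (angle x y) := by
  rw [div_add_div_eq_two_cos_angle (by simp [hx]) (by simp [hy]), angle_div_norm_div_norm]

lemma Real.cos_half_sq (x : ℝ) : cos (x / 2) ^ 2 = 1 / 2 + cos x / 2 := by
  rw [cos_sq, mul_div_cancel₀ x two_ne_zero]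

/-- For three non-collinear points `z₁, z₂, z₃` in the plane `ℂ`, with
`a = u₁₂`, `b = u₁₃`, `c = u₂₃` the unit directions and `A₁, A₂, A₃` the
interior angles of the triangle at `z₁, z₂, z₃`, the normalised determinant
`det [[1, -(a+b), ab], [1, a-c, -ac], [1, b+c, bc]] / (8abc)` equals
`½ (cos²(A₁/2) + cos²(A₂/2) + cos²(A₃/2))`. -/
theorem normalisedDet_three_points_eq_angles (z₁ z₂ z₃ : ℂ)
    (h : ¬ Collinear ℝ ({z₁, z₂, z₃} : Set ℂ)) :
    (Matrix.det
        !![1, -(((z₂ - z₁) / (‖z₂ - z₁‖ : ℂ)) +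
              ((z₃ - z₁) / (‖z₃ - z₁‖ : ℂ))),
            ((z₂ - z₁) / (‖z₂ - z₁‖ : ℂ)) *
              ((z₃ - z₁) / (‖z₃ - z₁‖ : ℂ));
          1, ((z₂ - z₁) / (‖z₂ - z₁‖ : ℂ)) -
              ((z₃ - z₂) / (‖z₃ - z₂‖ : ℂ)),
            -(((z₂ - z₁) / (‖z₂ - z₁‖ : ℂ)) *
              ((z₃ - z₂) / (‖z₃ - z₂‖ : ℂ)));
          1, ((z₃ - z₁) / (‖z₃ - z₁‖ : ℂ)) +
              ((z₃ - z₂) / (‖z₃ - z₂‖ : ℂ)),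
            ((z₃ - z₁) / (‖z₃ - z₁‖ : ℂ)) *
              ((z₃ - z₂) / (‖z₃ - z₂‖ : ℂ))]) /
      (8 * ((z₂ - z₁) / (‖z₂ - z₁‖ : ℂ)) *
        ((z₃ - z₁) / (‖z₃ - z₁‖ : ℂ)) *
        ((z₃ - z₂) / (‖z₃ - z₂‖ : ℂ)))
    = ((1 / 2 * (Real.cos (EuclideanGeometry.angle z₂ z₁ z₃ / 2) ^ 2 +
          Real.cos (EuclideanGeometry.angle z₁ z₂ z₃ / 2) ^ 2 +
          Real.cos (EuclideanGeometry.angle z₁ z₃ z₂ / 2) ^ 2) : ℝ) : ℂ) := by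
  have h₁₂ : z₂ - z₁ ≠ 0 := sub_ne_zero.2 (ne₁₂_of_not_collinear h).symm
  have h₁₃ : z₃ - z₁ ≠ 0 := sub_ne_zero.2 (ne₁₃_of_not_collinear h).symm
  have h₂₃ : z₃ - z₂ ≠ 0 := sub_ne_zero.2 (ne₂₃_of_not_collinear h).symm
  have angle₁ : EuclideanGeometry.angle z₂ z₁ z₃ = angle (z₂ - z₁) (z₃ - z₁) := rfl
  have angle₂ : EuclideanGeometry.angle z₁ z₂ z₃ = Real.pi - angle (z₂ - z₁) (z₃ - z₂) := by
    rw [EuclideanGeometry.angle, vsub_eq_sub, ← neg_sub, angle_neg_left, vsub_eq_sub]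
  have angle₃ : EuclideanGeometry.angle z₁ z₃ z₂ = angle (z₃ - z₁) (z₃ - z₂) := by
    rw [EuclideanGeometry.angle, vsub_eq_sub, vsub_eq_sub, ← neg_sub z₁, ← neg_sub z₂,
      angle_neg_neg]
  rw [det_div_eight_mul_mul_mul_eq (by simp [h₁₂]) (by simp [h₁₃]) (by simp [h₂₃]),
    div_norm_div_add_div_norm_div h₁₂ h₁₃, div_norm_div_add_div_norm_div h₁₃ h₂₃,
    div_norm_div_add_div_norm_div h₁₂ h₂₃, angle₁, angle₂, angle₃, Real.cos_half_sq,
    Real.cos_half_sq, Real.cos_half_sq, Real.cos_pi_sub]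
  push_cast
  ring
end

section
/- Work in Minkowski space ℝ³ × ℝ with quadratic form ‖x‖² − t² (speed of light 1). Let v₁, v₂ ∈ ℝ³ with ‖v₁‖ < 1 and ‖v₂‖ < 1, and let ξ₁ = { p₁ + s·(v₁, 1) : s ∈ ℝ } and ξ₂ = { p₂ + s·(v₂, 1) : s ∈ ℝ } be two disjoint timelike world lines. Let x₁ ∈ ξ₁ and x₂ ∈ ξ₂ be events. Let y₂ ∈ ξ₂ be a point with x₁ − y₂ lightlike (i.e. ‖spatial(x₁ − y₂)‖ = time(x₁ − y₂)) and time(x₁ − y₂) > 0, and similarly let y₁ ∈ ξ₁ satisfy that x₂ − y₁ is lightlike with time(x₂ − y₁) > 0. Define the celestial directions u₁₂ := spatial(x₁ − y₂)/‖spatial(x₁ − y₂)‖ ∈ S² and u₂₁ := spatial(x₂ − y₁)/‖spatial(x₂ − y₁)‖ ∈ S². Then u₁₂ ≠ u₂₁. (This is the Minkowski space conjecture for n = 2.) -/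
/-- Euclidean norm of a vector in `ℝ³`. -/
noncomputable def norm3 (w : Fin 3 → ℝ) : ℝ := Real.sqrt (w 0 ^ 2 + w 1 ^ 2 + w 2 ^ 2)

/-- The world line through the event `p ∈ ℝ³ × ℝ` with velocity `v`
(direction `(v, 1)` in Minkowski space). -/
def worldLine (p : (Fin 3 → ℝ) × ℝ) (v : Fin 3 → ℝ) (s : ℝ) : (Fin 3 → ℝ) × ℝ :=
  (fun k => p.1 k + s * v k, p.2 + s)

/-- The Minkowski space conjecture for `n = 2`: given two disjoint timelike
world lines `ξ₁, ξ₂` in Minkowski space `ℝ³ × ℝ` (speed of light `1`), events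
`x₁ = ξ₁(s₁)`, `x₂ = ξ₂(s₂)`, and points `y₂ = ξ₂(r₂)`, `y₁ = ξ₁(r₁)` on the
past light cones of `x₁`, `x₂` respectively, the celestial directions
`u₁₂ = spatial(x₁ - y₂)/‖spatial(x₁ - y₂)‖` and
`u₂₁ = spatial(x₂ - y₁)/‖spatial(x₂ - y₁)‖` are distinct. -/
theorem minkowski_conjecture_two_points
    (p₁ p₂ : (Fin 3 → ℝ) × ℝ) (v₁ v₂ : Fin 3 → ℝ)
    (hv₁ : norm3 v₁ < 1) (hv₂ : norm3 v₂ < 1)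
    (hdisj : ∀ s s' : ℝ, worldLine p₁ v₁ s ≠ worldLine p₂ v₂ s')
    (s₁ s₂ r₁ r₂ : ℝ)
    (h12light : norm3 (fun k => (worldLine p₁ v₁ s₁).1 k - (worldLine p₂ v₂ r₂).1 k)
      = (worldLine p₁ v₁ s₁).2 - (worldLine p₂ v₂ r₂).2)
    (h12pos : 0 < (worldLine p₁ v₁ s₁).2 - (worldLine p₂ v₂ r₂).2)
    (h21light : norm3 (fun k => (worldLine p₂ v₂ s₂).1 k - (worldLine p₁ v₁ r₁).1 k)
      = (worldLine p₂ v₂ s₂).2 - (worldLine p₁ v₁ r₁).2)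
    (h21pos : 0 < (worldLine p₂ v₂ s₂).2 - (worldLine p₁ v₁ r₁).2) :
    (fun k => ((worldLine p₁ v₁ s₁).1 k - (worldLine p₂ v₂ r₂).1 k) /
        norm3 (fun k => (worldLine p₁ v₁ s₁).1 k - (worldLine p₂ v₂ r₂).1 k))
      ≠ (fun k => ((worldLine p₂ v₂ s₂).1 k - (worldLine p₁ v₁ r₁).1 k) /
        norm3 (fun k => (worldLine p₂ v₂ s₂).1 k - (worldLine p₁ v₁ r₁).1 k)) := by
  intro heq
  have hta : (worldLine p₁ v₁ s₁).2 - (worldLine p₂ v₂ r₂).2 = p₁.2 + s₁ - (p₂.2 + r₂) := by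
    simp [worldLine]
  have htb : (worldLine p₂ v₂ s₂).2 - (worldLine p₁ v₁ r₁).2 = p₂.2 + s₂ - (p₁.2 + r₁) := by
    simp [worldLine]
  rw [hta] at h12light h12pos
  rw [htb] at h21light h21pos
  set a : ℝ := p₁.2 + s₁ - (p₂.2 + r₂) with ha
  set b : ℝ := p₂.2 + s₂ - (p₁.2 + r₁) with hb
  have hane : a ≠ 0 := ne_of_gt h12pos
  have hbne : b ≠ 0 := ne_of_gt h21pos
  have hab : a + b ≠ 0 := ne_of_gt (by linarith)
  have key : ∀ k : Fin 3,
      b * (p₁.1 k + s₁ * v₁ k - (p₂.1 k + r₂ * v₂ k))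
        = a * (p₂.1 k + s₂ * v₂ k - (p₁.1 k + r₁ * v₁ k)) := by
    intro k
    have hk := congrFun heq k
    rw [h12light, h21light] at hk
    simp only [worldLine] at hk
    rw [div_eq_div_iff hane hbne] at hk
    linarith [hk]
  exact hdisj ((b * s₁ + a * r₁) / (a + b)) ((b * r₂ + a * s₂) / (a + b)) (by
    refine Prod.ext ?_ ?_
    · funext k
      have hk := key k
      show p₁.1 k + (b * s₁ + a * r₁) / (a + b) * v₁ k
          = p₂.1 k + (b * r₂ + a * s₂) / (a + b) * v₂ k
      field_simp
      linear_combination hk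
    · show p₁.2 + (b * s₁ + a * r₁) / (a + b) = p₂.2 + (b * r₂ + a * s₂) / (a + b)
      rw [ha, hb] at *
      field_simp
      ring)
end

section
/- Let g ≥ 1 be an integer. In the polynomial ring ℤ[t], the polynomial (1 − t²)(1 − t⁴) divides (1 + t³)^{2g} − t^{2g}·(1 + t)^{2g}, and the quotient polynomial has degree 6g − 6. -/
open Polynomial

/-- In `ℤ[t]`, the polynomial `(1 - t²)(1 - t⁴)` divides
`(1 + t³)^{2g} - t^{2g} (1 + t)^{2g}`, and the quotient has degree `6g - 6`. -/
theorem moduli_poincare_divisibility (g : ℕ) (hg : 1 ≤ g) :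
    ∃ Q : Polynomial ℤ,
      (1 + X ^ 3) ^ (2 * g) - X ^ (2 * g) * (1 + X) ^ (2 * g)
        = (1 - X ^ 2) * (1 - X ^ 4) * Q ∧ Q.natDegree = 6 * g - 6 := by
  obtain ⟨m, rfl⟩ : ∃ m, g = 1 + m := ⟨g - 1, by omega⟩
  set S : Polynomial ℤ :=
    ∑ i ∈ Finset.range (1 + m), ((1 - X + X ^ 2) ^ 2) ^ i * (X ^ 2) ^ (1 + m - 1 - i) with hSdef
  set Q : Polynomial ℤ := (1 + X) ^ (2 * m) * S with hQdef
  have heq : ((1 : Polynomial ℤ) + X ^ 3) ^ (2 * (1 + m))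
      - X ^ (2 * (1 + m)) * (1 + X) ^ (2 * (1 + m))
      = (1 - X ^ 2) * (1 - X ^ 4) * Q := by
    have hS : S * ((1 - X + X ^ 2) ^ 2 - X ^ 2)
        = ((1 - X + X ^ 2) ^ 2) ^ (1 + m) - (X ^ 2) ^ (1 + m) :=
      geom_sum₂_mul _ _ _
    rw [← pow_mul, ← pow_mul] at hS
    have h1 : ((1 : Polynomial ℤ) + X ^ 3) ^ (2 * (1 + m))
        = (1 + X) ^ (2 * (1 + m)) * (1 - X + X ^ 2) ^ (2 * (1 + m)) := by
      rw [← mul_pow]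
      congr 1
      ring
    rw [h1, hQdef]
    linear_combination (-((1 : Polynomial ℤ) + X) ^ (2 * (1 + m))) * hS
  refine ⟨Q, heq, ?_⟩
  -- degree computations
  have hmon3 : ((1 : Polynomial ℤ) + X ^ 3).Monic := by
    have h := monic_X_pow_add (p := (1 : Polynomial ℤ)) (n := 3)
      (by simp)
    simpa [add_comm] using h
  have hdeg3 : ((1 : Polynomial ℤ) + X ^ 3).natDegree = 3 := by compute_degree!
  have hmon1 : ((1 : Polynomial ℤ) + X).Monic := by
    have h := monic_X_add_C (1 : ℤ)
    simpa [add_comm] using h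
  have hdeg1 : ((1 : Polynomial ℤ) + X).natDegree = 1 := by compute_degree!
  have hNl : (((1 : Polynomial ℤ) + X ^ 3) ^ (2 * (1 + m))).natDegree = 6 * (1 + m) := by
    rw [hmon3.natDegree_pow, hdeg3]; ring
  have hNr : ((X : Polynomial ℤ) ^ (2 * (1 + m)) * (1 + X) ^ (2 * (1 + m))).natDegree
      = 4 * (1 + m) := by
    rw [natDegree_mul (pow_ne_zero _ X_ne_zero) (pow_ne_zero _ hmon1.ne_zero),
      natDegree_X_pow, hmon1.natDegree_pow, hdeg1]
    ring
  have hN : (((1 : Polynomial ℤ) + X ^ 3) ^ (2 * (1 + m))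
      - X ^ (2 * (1 + m)) * (1 + X) ^ (2 * (1 + m))).natDegree = 6 * (1 + m) := by
    rw [natDegree_sub_eq_left_of_natDegree_lt (by rw [hNl, hNr]; omega), hNl]
  have hD : (((1 : Polynomial ℤ) - X ^ 2) * (1 - X ^ 4)) ≠ 0 := by
    intro h
    have : (((1 : Polynomial ℤ) - X ^ 2) * (1 - X ^ 4)).coeff 6 = 1 := by
      norm_num [coeff_one, coeff_X_pow, sub_mul, mul_sub, coeff_sub, ← pow_add]
    rw [h] at this
    simp at this
  have hDdeg : (((1 : Polynomial ℤ) - X ^ 2) * (1 - X ^ 4)).natDegree = 6 := by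
    compute_degree!
  have hQne : Q ≠ 0 := by
    intro h
    rw [h, mul_zero] at heq
    rw [heq] at hN
    simp at hN
  rw [heq, natDegree_mul hD hQne, hDdeg] at hN
  omega
end

section
/- Let g ≥ 1 be an integer and let Q ∈ ℤ[t] be the quotient polynomial Q(t) = ( (1 + t³)^{2g} − t^{2g}·(1 + t)^{2g} ) / ( (1 − t²)(1 − t⁴) ). Then Q is palindromic of degree 6g − 6, i.e. the coefficient of t^k in Q equals the coefficient of t^{6g−6−k} for every 0 ≤ k ≤ 6g − 6, and all coefficients of Q are nonnegative. -/
open Polynomial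

private lemma reflect_pow' (f : Polynomial ℤ) (m : ℕ) (hf : f.natDegree ≤ m) (k : ℕ) :
    reflect (m * k) (f ^ k) = (reflect m f) ^ k := by
  induction k with
  | zero => simp
  | succ k ih =>
      have h1 : (f ^ k).natDegree ≤ m * k :=
        (natDegree_pow_le).trans (by nlinarith)
      rw [pow_succ, pow_succ, ← ih, Nat.mul_succ, reflect_mul _ _ h1 hf]

private lemma nn_mul {p q : Polynomial ℤ} (hp : ∀ k, 0 ≤ p.coeff k)
    (hq : ∀ k, 0 ≤ q.coeff k) : ∀ k, 0 ≤ (p * q).coeff k := by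
  intro k
  rw [coeff_mul]
  exact Finset.sum_nonneg fun x _ => mul_nonneg (hp _) (hq _)

private lemma nn_pow {p : Polynomial ℤ} (hp : ∀ k, 0 ≤ p.coeff k) (n : ℕ) :
    ∀ k, 0 ≤ (p ^ n).coeff k := by
  induction n with
  | zero => intro k; simp [coeff_one]; split_ifs <;> norm_num
  | succ n ih => rw [pow_succ]; exact nn_mul ih hp

/-- The quotient polynomial
`Q(t) = ((1 + t³)^{2g} - t^{2g} (1 + t)^{2g}) / ((1 - t²)(1 - t⁴))` in `ℤ[t]`
is palindromic of degree `6g - 6`, and all its coefficients are nonnegative. -/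
theorem moduli_poincare_palindromic_nonneg (g : ℕ) (hg : 1 ≤ g)
    (Q : Polynomial ℤ)
    (hQ : (1 - X ^ 2) * (1 - X ^ 4) * Q
      = (1 + X ^ 3) ^ (2 * g) - X ^ (2 * g) * (1 + X) ^ (2 * g)) :
    Q.natDegree = 6 * g - 6 ∧
    (∀ k ≤ 6 * g - 6, Q.coeff k = Q.coeff (6 * g - 6 - k)) ∧
    (∀ k, 0 ≤ Q.coeff k) := by
  set D : Polynomial ℤ := (1 - X ^ 2) * (1 - X ^ 4) with hD_def
  set A : Polynomial ℤ := 1 + X ^ 3 with hA_def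
  set B : Polynomial ℤ := X + X ^ 2 with hB_def
  set N : Polynomial ℤ := (1 + X ^ 3) ^ (2 * g) - X ^ (2 * g) * (1 + X) ^ (2 * g) with hN_def
  have hXB : (X : Polynomial ℤ) ^ (2 * g) * (1 + X) ^ (2 * g) = B ^ (2 * g) := by
    rw [hB_def, ← mul_pow]; ring_nf
  -- rewrite N as A^(2g) - B^(2g)
  have hAB' : N = A ^ (2 * g) - B ^ (2 * g) := by
    rw [hN_def, ← hXB, hA_def]
  have hAB : N = (A ^ 2) ^ g - (B ^ 2) ^ g := by
    rw [hAB', ← pow_mul, ← pow_mul]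
  -- the denominator is A^2 - B^2
  have hDab : D = A ^ 2 - B ^ 2 := by rw [hD_def, hA_def, hB_def]; ring
  -- the explicit quotient
  set S : Polynomial ℤ := ∑ i ∈ Finset.range g, (A ^ 2) ^ i * (B ^ 2) ^ (g - 1 - i) with hS_def
  have hDS : D * S = N := by
    rw [hAB, hDab, hS_def, mul_comm]
    exact geom_sum₂_mul _ _ g
  -- D ≠ 0
  have hD0 : D ≠ 0 := by
    intro h
    have := congrArg (Polynomial.eval 0) h
    simp [hD_def] at this
  have hQS : Q = S := mul_left_cancel₀ hD0 (by rw [hQ, hDS])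
  -- degrees
  have hdA : A.natDegree = 3 := by rw [hA_def]; compute_degree!
  have hdB : B.natDegree ≤ 3 := by rw [hB_def]; compute_degree!
  have hdD : D.natDegree = 6 := by rw [hD_def]; compute_degree!
  have hdA2g : (A ^ (2 * g)).natDegree = 6 * g := by
    rw [natDegree_pow, hdA]; ring
  have hdX : (B ^ (2 * g) : Polynomial ℤ).natDegree ≤ 6 * g - 1 := by
    refine natDegree_pow_le.trans ?_
    have h2 : (B).natDegree ≤ 2 := by rw [hB_def]; compute_degree!
    calc 2 * g * B.natDegree ≤ 2 * g * 2 := by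
          exact Nat.mul_le_mul_left _ h2
      _ ≤ 6 * g - 1 := by omega
  have hdXlt : (B ^ (2 * g) : Polynomial ℤ).natDegree < (A ^ (2 * g)).natDegree := by
    rw [hdA2g]; omega
  have hdN : N.natDegree = 6 * g := by
    rw [hAB', natDegree_sub_eq_left_of_natDegree_lt hdXlt, hdA2g]
  have hN0 : N ≠ 0 := by
    intro h
    rw [h, natDegree_zero] at hdN
    omega
  have hQ0 : Q ≠ 0 := by
    intro h
    rw [h, mul_zero] at hQ
    exact hN0 hQ.symm
  have hdQ : Q.natDegree = 6 * g - 6 := by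
    have h := natDegree_mul hD0 hQ0
    rw [hQ, hdN, hdD] at h
    omega
  refine ⟨hdQ, ?_, ?_⟩
  · -- palindromicity
    intro k hk
    have hreflA : reflect 3 A = A := by
      rw [hA_def]
      have h1 : (1 : Polynomial ℤ) + X ^ 3 = X ^ 0 + X ^ 3 := by simp
      rw [h1, reflect_add, reflect_monomial, reflect_monomial]
      norm_num [revAt_le]
      ring
    have hreflB : reflect 3 B = B := by
      rw [hB_def]
      have h1 : (X : Polynomial ℤ) + X ^ 2 = X ^ 1 + X ^ 2 := by simp
      rw [h1, reflect_add, reflect_monomial, reflect_monomial]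
      norm_num [revAt_le]
      ring
    have hreflD : reflect 6 D = D := by
      have hDe : D = X ^ 0 - X ^ 2 - X ^ 4 + X ^ 6 := by rw [hD_def]; ring
      rw [hDe, reflect_add, reflect_sub, reflect_sub, reflect_monomial, reflect_monomial,
        reflect_monomial, reflect_monomial]
      norm_num [revAt_le]
      ring
    have hreflN : reflect (6 * g) N = N := by
      have h6 : 6 * g = 3 * (2 * g) := by ring
      rw [hAB', h6, reflect_sub, reflect_pow' A 3 hdA.le, reflect_pow' B 3 hdB, hreflA, hreflB]
    have hreflQ : reflect (6 * g - 6) Q = Q := by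
      have hmul := reflect_mul D Q (F := 6) (G := 6 * g - 6) hdD.le hdQ.le
      have h66 : 6 + (6 * g - 6) = 6 * g := by omega
      rw [h66, hQ, hreflN, hreflD, ← hQ] at hmul
      exact mul_left_cancel₀ hD0 hmul.symm
    conv_lhs => rw [← hreflQ]
    rw [coeff_reflect, revAt_le hk]
  · -- nonnegativity
    intro k
    rw [hQS, hS_def, finset_sum_coeff]
    refine Finset.sum_nonneg fun i _ => ?_
    refine nn_mul (nn_pow ?_ _) (nn_pow ?_ _) k
    · intro k
      rw [hA_def, pow_two]
      refine nn_mul ?_ ?_ k <;>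
      · intro k
        simp only [coeff_add, coeff_one, coeff_X_pow]
        split_ifs <;> norm_num
    · intro k
      rw [hB_def, pow_two]
      refine nn_mul ?_ ?_ k <;>
      · intro k
        simp only [coeff_add, coeff_X, coeff_X_pow]
        split_ifs <;> norm_num
end

section
/- Let F be a finite field with q elements and let n ≥ 1. The number of complete flags in F^n — that is, the number of chains of F-subspaces 0 = W₀ < W₁ < W₂ < ⋯ < W_n = F^n (equivalently, strictly increasing maps from {0, 1, …, n} to subspaces of F^n with W₀ the zero subspace and W_n the whole space) — equals ∏_{k=1}^{n} (1 + q + q² + ⋯ + q^{k−1}) = ∏_{k=1}^{n} (q^k − 1)/(q − 1). -/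
/-!
A complete flag `0 = W₀ < W₁ < ⋯ < W_n = V` is determined by its line `W₁` together with the
complete flag `W₂/W₁ < ⋯ < W_n/W₁` of `V ⧸ W₁`. Hence the number of complete flags of an
`n`-dimensional space is the number `1 + q + ⋯ + q^{n-1}` of its lines times the number of complete
flags of an `(n-1)`-dimensional space.
-/

open Module Finset

/-- Strict chains `⊥ = W 0 < W 1 < ⋯ < W m = ⊤`; in the lattice of subspaces of an
`m`-dimensional space these are exactly the complete flags. -/
abbrev CompleteFlag (α : Type*) [Preorder α] [OrderBot α] [OrderTop α] (m : ℕ) :=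
  {W : Fin (m + 1) → α // StrictMono W ∧ W 0 = ⊥ ∧ W (Fin.last m) = ⊤}

lemma StrictMono.apply_eq_val_of_apply_last_le {N : ℕ} {f : Fin (N + 1) → ℕ} (hf : StrictMono f)
    (hN : f (Fin.last N) ≤ N) (i : Fin (N + 1)) : f i = i := by
  let g : Fin (N + 1) → Fin (N + 1) := fun j =>
    ⟨f j, Nat.lt_succ_of_le ((hf.monotone (Fin.le_last j)).trans hN)⟩
  have hg : StrictMono g := fun _ _ h => hf h
  exact congrArg Fin.val (congrFun hg.eq_id i)

lemma Fin.one_le_succ {n : ℕ} (j : Fin (n + 1)) : (1 : Fin (n + 2)) ≤ j.succ := by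
  simp [Fin.le_def]

lemma Nat.card_eq_card_mul_of_card_fiber {α β : Type*} [Finite α] [Finite β] (f : α → β) {c : ℕ}
    (hc : ∀ b, Nat.card {a // f a = b} = c) : Nat.card α = Nat.card β * c := by
  have := Fintype.ofFinite β
  rw [← Nat.card_congr (Equiv.sigmaFiberEquiv f), Nat.card_sigma, sum_congr rfl fun b _ => hc b,
    sum_const, smul_eq_mul, Finset.card_univ, Nat.card_eq_fintype_card]

namespace CompleteFlag

variable {α β : Type*} [PartialOrder α] [OrderBot α] [OrderTop α] [PartialOrder β] [OrderBot β]
  [OrderTop β] {m : ℕ}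

def congr (e : α ≃o β) : CompleteFlag α m ≃ CompleteFlag β m where
  toFun W := ⟨e ∘ W.1, e.strictMono.comp W.2.1, by simp [W.2.2.1], by simp [W.2.2.2]⟩
  invFun W := ⟨e.symm ∘ W.1, e.symm.strictMono.comp W.2.1, by simp [W.2.2.1], by simp [W.2.2.2]⟩
  left_inv W := by ext; simp
  right_inv W := by ext; simp

lemma card_zero (h : (⊥ : α) = ⊤) : Nat.card (CompleteFlag α 0) = 1 :=
  Nat.card_eq_one_iff_exists.mpr
    ⟨⟨fun _ => ⊥, (Subsingleton.strictMono _ : StrictMono fun _ : Fin 1 => ⊥), rfl, h⟩,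
    fun W => Subtype.ext (funext fun i => by rw [Fin.fin_one_eq_zero i, W.2.2.1])⟩

def fiberApplyOneEquiv {a : α} (ha : a ≠ ⊥) :
    {W : CompleteFlag α (m + 1) // W.1 1 = a} ≃ CompleteFlag (Set.Ici a) m where
  toFun W := ⟨fun j => ⟨W.1.1 j.succ, W.2.ge.trans (W.1.2.1.monotone (Fin.one_le_succ j))⟩,
    fun _ _ h => W.1.2.1 (Fin.succ_lt_succ_iff.mpr h), Subtype.ext W.2, Subtype.ext W.1.2.2.2⟩
  invFun U := ⟨⟨Fin.cons ⊥ fun j => U.1 j,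
    Fin.strictMono_cons.mpr ⟨fun j => ha.bot_lt.trans_le (U.1 j).2.out, fun _ _ h => U.2.1 h⟩, rfl,
    by simp [← Fin.succ_last, U.2.2.2]⟩, by simp [Fin.cons_one, U.2.2.1]⟩
  left_inv W := by
    ext i
    cases i using Fin.cases <;> simp [W.1.2.2.1]
  right_inv U := by ext; simp

end CompleteFlag

lemma CompleteFlag.finrank_apply {F V : Type*} [DivisionRing F] [AddCommGroup V] [Module F V]
    [FiniteDimensional F V] {m : ℕ} (hV : finrank F V = m) (W : CompleteFlag (Submodule F V) m)
    (i : Fin (m + 1)) : finrank F (W.1 i) = i :=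
  (Submodule.finrank_strictMono.comp W.2.1).apply_eq_val_of_apply_last_le
    (by rw [Function.comp_apply, W.2.2.2, finrank_top, hV]) i

lemma Submodule.card_finrank_eq_one (F V : Type*) [Field F] [Finite F] [AddCommGroup V]
    [Module F V] : Nat.card {L : Submodule F V // finrank F L = 1} =
      ∑ i ∈ range (finrank F V), Nat.card F ^ i :=
  (Nat.card_congr (Projectivization.equivSubmodule F V)).symm.trans
    (Projectivization.card_of_finrank F V rfl)

theorem CompleteFlag.card_submodule {F V : Type*} [Field F] [Finite F] [AddCommGroup V]
    [Module F V] [FiniteDimensional F V] {m : ℕ} (hV : finrank F V = m) :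
    Nat.card (CompleteFlag (Submodule F V) m) =
      ∏ k ∈ range m, ∑ i ∈ range (k + 1), Nat.card F ^ i := by
  induction m generalizing V with
  | zero =>
    exact card_zero (Submodule.finrank_eq_zero.mp ((finrank_top F V).trans hV)).symm
  | succ m ih =>
    have : Finite V := Module.finite_of_finite F
    have : Finite (Submodule F V) := Finite.of_injective _ SetLike.coe_injective
    let line (W : CompleteFlag (Submodule F V) (m + 1)) : {L : Submodule F V // finrank F L = 1} :=
      ⟨W.1 1, W.finrank_apply hV 1⟩
    have hfiber (L : {L : Submodule F V // finrank F L = 1}) :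
        Nat.card {W // line W = L} = ∏ k ∈ range m, ∑ i ∈ range (k + 1), Nat.card F ^ i := by
      have hL : L.1 ≠ ⊥ := fun h => one_ne_zero (L.2.symm.trans (Submodule.finrank_eq_zero.mpr h))
      have hquot : finrank F (V ⧸ L.1) = m := by
        have := L.1.finrank_quotient_add_finrank
        omega
      rw [← ih hquot]
      exact Nat.card_congr <| (Equiv.subtypeEquivRight fun W => Subtype.ext_iff).trans <|
        (fiberApplyOneEquiv hL).trans (congr (Submodule.comapMkQRelIso L.1).symm)
    rw [Nat.card_eq_card_mul_of_card_fiber line hfiber, Submodule.card_finrank_eq_one, hV,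
      prod_range_succ, mul_comm]

theorem card_complete_flags_finite_field_general (F : Type*) [Field F] [Fintype F]
    (q : ℕ) (hq : Fintype.card F = q) (n : ℕ) :
    Nat.card {W : Fin (n + 1) → Submodule F (Fin n → F) //
        StrictMono W ∧ W 0 = ⊥ ∧ W (Fin.last n) = ⊤}
      = ∏ k ∈ Finset.range n, ∑ i ∈ Finset.range (k + 1), q ^ i ∧
    Nat.card {W : Fin (n + 1) → Submodule F (Fin n → F) //
        StrictMono W ∧ W 0 = ⊥ ∧ W (Fin.last n) = ⊤}
      = ∏ k ∈ Finset.range n, (q ^ (k + 1) - 1) / (q - 1) := by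
  have hq2 : 2 ≤ q := hq ▸ Fintype.one_lt_card
  have hflags := CompleteFlag.card_submodule (finrank_fin_fun F (n := n))
  rw [Nat.card_eq_fintype_card (α := F), hq] at hflags
  exact ⟨hflags, hflags.trans (prod_congr rfl fun k _ => Nat.geomSum_eq hq2 _)⟩

/-- The number of complete flags `0 = W₀ < W₁ < ⋯ < W_n = F^n` in `F^n`, for a
finite field `F` with `q` elements, equals
`∏_{k=1}^{n} (1 + q + ⋯ + q^{k-1}) = ∏_{k=1}^{n} (q^k - 1)/(q - 1)`. -/
theorem card_complete_flags_finite_field (F : Type*) [Field F] [Fintype F]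
    (q : ℕ) (hq : Fintype.card F = q) (n : ℕ) (hn : 1 ≤ n) :
    Nat.card {W : Fin (n + 1) → Submodule F (Fin n → F) //
        StrictMono W ∧ W 0 = ⊥ ∧ W (Fin.last n) = ⊤}
      = ∏ k ∈ Finset.range n, ∑ i ∈ Finset.range (k + 1), q ^ i ∧
    Nat.card {W : Fin (n + 1) → Submodule F (Fin n → F) //
        StrictMono W ∧ W 0 = ⊥ ∧ W (Fin.last n) = ⊤}
      = ∏ k ∈ Finset.range n, (q ^ (k + 1) - 1) / (q - 1) :=
  card_complete_flags_finite_field_general F q hq n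
end
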